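/- arXiv:0902.1403 — 4 statements merged into one kernel-verified Lean document; each statement's English description precedes it below -/
import Mathlib

section
/- The covariance kernel of standard fractional Brownian motion, R(s,t) = (1/2)(|t|^{2H} + |s|^{2H} - |t-s|^{2H}), is positive semidefinite on [0,∞) for every H ∈ (0,1]: for all n, all t_1,...,t_n ≥ 0 and all real c_1,...,c_n, ∑_{i,j} c_i c_j R(t_i,t_j) ≥ 0. -/
open MeasureTheory Real Set


lemma kern_meas (a x : ℝ) :
    Measurable (fun u : ℝ => (1 - Real.cos (x*u)) * u ^ (-(1+a))) := by
  fun_prop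

lemma kern_nonneg (a x : ℝ) {u : ℝ} (hu : 0 < u) :
    0 ≤ (1 - Real.cos (x*u)) * u ^ (-(1+a)) :=
  mul_nonneg (by linarith [Real.cos_le_one (x*u)]) (Real.rpow_nonneg hu.le _)

lemma kern_integrable {a : ℝ} (ha : 0 < a) (ha2 : a < 2) (x : ℝ) :
    IntegrableOn (fun u : ℝ => (1 - Real.cos (x*u)) * u ^ (-(1+a))) (Ioi 0) := by
  have hsplit : Ioi (0:ℝ) = Ioc 0 1 ∪ Ioi 1 := by
    rw [Ioc_union_Ioi_eq_Ioi]; norm_num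
  rw [hsplit, integrableOn_union]
  constructor
  · -- near 0 : bound by (x^2/2) * u^(1-a)
    have hi : IntegrableOn (fun u : ℝ => x^2/2 * u ^ (1-a)) (Ioc 0 1) := by
      apply Integrable.const_mul
      have h := intervalIntegral.intervalIntegrable_rpow' (a := (0:ℝ)) (b := 1)
        (r := 1 - a) (by linarith)
      rw [intervalIntegrable_iff_integrableOn_Ioc_of_le (by norm_num)] at h
      exact h
    refine Integrable.mono' hi ((kern_meas a x).aestronglyMeasurable.restrict) ?_
    filter_upwards [ae_restrict_mem measurableSet_Ioc] with u hu
    rw [Real.norm_eq_abs, abs_of_nonneg (kern_nonneg a x hu.1)]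
    have h1 : 1 - Real.cos (x*u) ≤ (x*u)^2/2 := by
      linarith [Real.one_sub_sq_div_two_le_cos (x := x*u)]
    have h2 : (0:ℝ) ≤ u ^ (-(1+a)) := Real.rpow_nonneg hu.1.le _
    calc (1 - Real.cos (x*u)) * u ^ (-(1+a)) ≤ (x*u)^2/2 * u ^ (-(1+a)) := by
          exact mul_le_mul_of_nonneg_right h1 h2
      _ = x^2/2 * (u^2 * u ^ (-(1+a))) := by ring
      _ = x^2/2 * u ^ (1-a) := by
          rw [← Real.rpow_natCast u 2, ← Real.rpow_add hu.1]
          norm_num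
          left; congr 1; ring
  · -- near ∞ : bound by 2 * u^(-(1+a))
    have hi : IntegrableOn (fun u : ℝ => 2 * u ^ (-(1+a))) (Ioi 1) :=
      (integrableOn_Ioi_rpow_of_lt (by linarith) one_pos).const_mul 2
    refine Integrable.mono' hi ((kern_meas a x).aestronglyMeasurable.restrict) ?_
    filter_upwards [ae_restrict_mem measurableSet_Ioi] with u hu
    have hu0 : (0:ℝ) < u := lt_trans one_pos hu
    rw [Real.norm_eq_abs, abs_of_nonneg (kern_nonneg a x hu0)]
    have h2 : (0:ℝ) ≤ u ^ (-(1+a)) := Real.rpow_nonneg hu0.le _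
    have : 1 - Real.cos (x*u) ≤ 2 := by linarith [Real.neg_one_le_cos (x*u)]
    nlinarith

noncomputable def fbmI (a : ℝ) : ℝ := ∫ u in Ioi (0:ℝ), (1 - Real.cos u) * u ^ (-(1+a))

lemma kern_nonneg' (a x : ℝ) {u : ℝ} (hu : 0 < u) :
    0 ≤ (1 - Real.cos (x*u)) * u ^ (-(1+a)) :=
  mul_nonneg (by linarith [Real.cos_le_one (x*u)]) (Real.rpow_nonneg hu.le _)

-- scaling
lemma fbm_scale {a : ℝ} (ha : 0 < a) (ha2 : a < 2) (x : ℝ) :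
    ∫ u in Ioi (0:ℝ), (1 - Real.cos (x*u)) * u ^ (-(1+a)) = |x| ^ a * fbmI a := by
  rcases eq_or_ne x 0 with rfl | hx
  · simp [Real.zero_rpow (ne_of_gt ha)]
  · have hc : 0 < |x| := abs_pos.mpr hx
    have key : ∀ u ∈ Ioi (0:ℝ),
        (1 - Real.cos (x*u)) * u ^ (-(1+a))
          = |x| ^ (1+a) * ((1 - Real.cos (|x| * u)) * (|x| * u) ^ (-(1+a))) := by
      intro u hu
      have hu0 : (0:ℝ) < u := hu
      have : Real.cos (x * u) = Real.cos (|x| * u) := by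
        rcases abs_choice x with h | h
        · rw [h]
        · rw [h]; rw [neg_mul, Real.cos_neg]
      rw [this, Real.mul_rpow hc.le hu0.le]
      have h1 : |x| ^ (1+a) * |x| ^ (-(1+a)) = 1 := by
        rw [← Real.rpow_add hc, show 1 + a + -(1+a) = 0 by ring, Real.rpow_zero]
      calc (1 - Real.cos (|x| * u)) * u ^ (-(1+a))
          = (|x| ^ (1+a) * |x| ^ (-(1+a))) * ((1 - Real.cos (|x| * u)) * u ^ (-(1+a))) := by
            rw [h1, one_mul]
        _ = |x| ^ (1+a) * ((1 - Real.cos (|x| * u)) * (|x| ^ (-(1+a)) * u ^ (-(1+a)))) := by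
            ring
    rw [setIntegral_congr_fun measurableSet_Ioi key, integral_const_mul]
    have sub := MeasureTheory.integral_comp_mul_left_Ioi
      (fun v => (1 - Real.cos v) * v ^ (-(1+a))) 0 hc
    simp only [mul_zero] at sub
    rw [sub, fbmI, smul_eq_mul]
    rw [← mul_assoc, ← Real.rpow_neg_one |x|, ← Real.rpow_add hc,
      show 1 + a + -1 = a by ring]

lemma fbm_integrable1 {a : ℝ} (ha : 0 < a) (ha2 : a < 2) :
    IntegrableOn (fun u : ℝ => (1 - Real.cos u) * u ^ (-(1+a))) (Ioi 0) := by
  have h := kern_integrable ha ha2 1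
  simpa using h

lemma fbmI_pos {a : ℝ} (ha : 0 < a) (ha2 : a < 2) : 0 < fbmI a := by
  have hint := fbm_integrable1 ha ha2
  set f : ℝ → ℝ := fun u => (1 - Real.cos u) * u ^ (-(1+a)) with hf
  have hsub : Ioc (2:ℝ) 3 ⊆ Ioi 0 := fun u hu => lt_trans two_pos hu.1
  have hlow : ∀ u ∈ Ioc (2:ℝ) 3, (3:ℝ) ^ (-(1+a)) ≤ f u := by
    intro u hu
    have hu2 : (2:ℝ) < u := hu.1
    have hu3 : u ≤ 3 := hu.2
    have hcos : Real.cos u ≤ 0 := by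
      apply Real.cos_nonpos_of_pi_div_two_le_of_le
      · linarith [Real.pi_le_four]
      · linarith [Real.pi_gt_three]
    have h1 : (1:ℝ) ≤ 1 - Real.cos u := by linarith
    have h2 : (3:ℝ) ^ (-(1+a)) ≤ u ^ (-(1+a)) := by
      exact Real.rpow_le_rpow_of_nonpos (by linarith) hu3 (by linarith)
    calc (3:ℝ) ^ (-(1+a)) ≤ u ^ (-(1+a)) := h2
      _ = 1 * u ^ (-(1+a)) := (one_mul _).symm
      _ ≤ (1 - Real.cos u) * u ^ (-(1+a)) := by
          exact mul_le_mul_of_nonneg_right h1 (Real.rpow_nonneg (by linarith) _)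
  have hposc : (0:ℝ) < (3:ℝ) ^ (-(1+a)) := Real.rpow_pos_of_pos (by norm_num) _
  have key : (3:ℝ) ^ (-(1+a)) ≤ ∫ u in Ioc (2:ℝ) 3, f u := by
    have hconst : ∫ _ in Ioc (2:ℝ) 3, (3:ℝ) ^ (-(1+a)) = (3:ℝ) ^ (-(1+a)) := by
      rw [setIntegral_const, Real.volume_real_Ioc]
      norm_num
    rw [← hconst]
    apply setIntegral_mono_on
    · exact (integrableOn_const_iff).mpr (Or.inr (by rw [Real.volume_Ioc]; norm_num))
    · exact hint.mono_set hsub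
    · exact measurableSet_Ioc
    · exact hlow
  have key2 : ∫ u in Ioc (2:ℝ) 3, f u ≤ fbmI a := by
    apply setIntegral_mono_set hint
    · filter_upwards [ae_restrict_mem measurableSet_Ioi] with u hu
      exact kern_nonneg' a 1 (by simpa using hu) |>.trans_eq (by simp [hf])
    · exact HasSubset.Subset.eventuallyLE hsub
  linarith

lemma pointwise_negdef {n : ℕ} (t c : Fin n → ℝ) (hc : ∑ i, c i = 0) (u : ℝ) :
    ∑ i, ∑ j, c i * c j * (1 - Real.cos ((t i - t j)*u)) ≤ 0 := by
  have key : ∀ i j : Fin n, c i * c j * (1 - Real.cos ((t i - t j)*u))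
      = c i * c j - ((c i * Real.cos (t i * u)) * (c j * Real.cos (t j * u))
        + (c i * Real.sin (t i * u)) * (c j * Real.sin (t j * u))) := by
    intro i j
    rw [sub_mul, Real.cos_sub]
    ring
  simp only [key, Finset.sum_sub_distrib, Finset.sum_add_distrib,
    ← Finset.sum_mul, ← Finset.mul_sum, hc]
  nlinarith [sq_nonneg (∑ i, c i * Real.cos (t i * u)), sq_nonneg (∑ i, c i * Real.sin (t i * u))]

lemma negdef_lt2 {a : ℝ} (ha : 0 < a) (ha2 : a < 2) {n : ℕ} (t c : Fin n → ℝ)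
    (hc : ∑ i, c i = 0) : ∑ i, ∑ j, c i * c j * |t i - t j| ^ a ≤ 0 := by
  have hI := fbmI_pos ha ha2
  have key : fbmI a * (∑ i, ∑ j, c i * c j * |t i - t j| ^ a) ≤ 0 := by
    have h1 : fbmI a * (∑ i, ∑ j, c i * c j * |t i - t j| ^ a)
        = ∑ p ∈ Finset.univ ×ˢ Finset.univ,
          (fun p : Fin n × Fin n => ∫ u in Ioi (0:ℝ),
            c p.1 * c p.2 * ((1 - Real.cos ((t p.1 - t p.2)*u)) * u ^ (-(1+a)))) p := by
      rw [← Finset.sum_product']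
      rw [Finset.mul_sum]
      apply Finset.sum_congr rfl
      intro p _
      dsimp only
      rw [MeasureTheory.integral_const_mul, fbm_scale ha ha2]
      ring
    rw [h1, ← MeasureTheory.integral_finset_sum _
      (fun p _ => ((kern_integrable ha ha2 _).const_mul _))]
    apply MeasureTheory.setIntegral_nonpos measurableSet_Ioi
    intro u hu
    have hu0 : (0:ℝ) < u := hu
    have hw : (0:ℝ) ≤ u ^ (-(1+a)) := Real.rpow_nonneg hu0.le _
    have heq : ∑ p ∈ Finset.univ ×ˢ Finset.univ,
        c (p : Fin n × Fin n).1 * c p.2 * ((1 - Real.cos ((t p.1 - t p.2)*u)) * u ^ (-(1+a)))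
        = (∑ i, ∑ j, c i * c j * (1 - Real.cos ((t i - t j)*u))) * u ^ (-(1+a)) := by
      simp only [Finset.sum_mul]
      rw [← Finset.sum_product']
      apply Finset.sum_congr rfl
      intro p _
      ring
    rw [heq]
    exact mul_nonpos_of_nonpos_of_nonneg (pointwise_negdef t c hc u) hw
  nlinarith

lemma negdef_all {a : ℝ} (ha : 0 < a) (ha2 : a ≤ 2) {n : ℕ} (t c : Fin n → ℝ)
    (hc : ∑ i, c i = 0) : ∑ i, ∑ j, c i * c j * |t i - t j| ^ a ≤ 0 := by
  rcases lt_or_eq_of_le ha2 with h | rfl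
  · exact negdef_lt2 ha h t c hc
  · have key : ∀ i j : Fin n, c i * c j * |t i - t j| ^ (2:ℝ)
        = c i * (t i)^2 * c j + c i * (c j * (t j)^2) - 2 * ((c i * t i) * (c j * t j)) := by
      intro i j
      rw [show ((2:ℝ)) = ((2:ℕ):ℝ) by norm_num, Real.rpow_natCast, sq_abs]
      ring
    simp only [key, Finset.sum_sub_distrib, Finset.sum_add_distrib,
      ← Finset.sum_mul, ← Finset.mul_sum, hc, mul_zero, zero_mul,
      Finset.sum_const_zero]
    nlinarith [sq_nonneg (∑ i, c i * t i)]

theorem fbm_kernel_posSemidef (H : ℝ) (h0 : 0 < H) (h1 : H ≤ 1)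
    (n : ℕ) (t : Fin n → ℝ) (ht : ∀ i, 0 ≤ t i) (c : Fin n → ℝ) :
    0 ≤ ∑ i, ∑ j, c i * c j *
      ((1/2) * ((t i) ^ (2*H) + (t j) ^ (2*H) - |t i - t j| ^ (2*H))) := by
  set a := 2*H with haa
  have ha : 0 < a := by positivity
  have ha2 : a ≤ 2 := by rw [haa]; linarith
  set S := ∑ i, c i with hS
  set A := ∑ i, c i * (t i) ^ a with hA
  set D := ∑ i, ∑ j, c i * c j * |t i - t j| ^ a with hD
  have habs : ∀ i, |t i| = t i := fun i => abs_of_nonneg (ht i)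
  set t' : Fin (n+1) → ℝ := Fin.cons 0 t with ht'
  set c' : Fin (n+1) → ℝ := Fin.cons (-S) c with hc'def
  have hc' : ∑ i, c' i = 0 := by
    rw [hc'def, Fin.sum_cons, hS]; ring
  have hneg := negdef_all ha ha2 t' c' hc'
  have b1 : ∑ j : Fin n, (-S) * c j * |(0:ℝ) - t j| ^ a = -(S*A) := by
    rw [show -(S*A) = (-S) * A by ring, hA, Finset.mul_sum]
    apply Finset.sum_congr rfl
    intro j _
    rw [zero_sub, abs_neg, habs j]; ring
  have b2 : ∑ i : Fin n, c i * (-S) * |t i - (0:ℝ)| ^ a = -(S*A) := by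
    rw [show -(S*A) = (-S) * A by ring, hA, Finset.mul_sum]
    apply Finset.sum_congr rfl
    intro i _
    rw [sub_zero, habs i]; ring
  have expand : ∑ i, ∑ j, c' i * c' j * |t' i - t' j| ^ a = -(S*A) + (-(S*A) + D) := by
    calc ∑ i, ∑ j, c' i * c' j * |t' i - t' j| ^ a
        = (c' 0 * c' 0 * |t' 0 - t' 0| ^ a
            + ∑ j : Fin n, c' 0 * c' j.succ * |t' 0 - t' j.succ| ^ a)
          + ∑ i : Fin n, (c' i.succ * c' 0 * |t' i.succ - t' 0| ^ a
            + ∑ j : Fin n, c' i.succ * c' j.succ * |t' i.succ - t' j.succ| ^ a) := by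
          rw [Fin.sum_univ_succ]
          congr 1
          · rw [Fin.sum_univ_succ]
          · apply Finset.sum_congr rfl; intro i _; rw [Fin.sum_univ_succ]
      _ = -(S*A) + (-(S*A) + D) := by
          simp only [ht', hc'def, Fin.cons_zero, Fin.cons_succ]
          rw [sub_self, abs_zero, Real.zero_rpow (ne_of_gt ha), mul_zero, zero_add, b1,
            Finset.sum_add_distrib, b2, hD]
  rw [expand] at hneg
  have hDle : D ≤ 2*(S*A) := by linarith
  have key2 : ∀ i j : Fin n, c i * c j * ((1/2)*((t i) ^ a + (t j) ^ a - |t i - t j| ^ a))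
      = (1/2) * (c i * (t i) ^ a * c j) + (1/2) * (c i * (c j * (t j) ^ a))
        - (1/2) * (c i * c j * |t i - t j| ^ a) := by
    intro i j; ring
  simp only [key2, Finset.sum_add_distrib, Finset.sum_sub_distrib,
    ← Finset.mul_sum, ← Finset.sum_mul, ← hS, ← hA, ← hD]
  nlinarith [hDle]
end

section
/- Let 0 < H < 1/2, and let f, g be step functions with f = ∑_{i=0}^{m-1} c_i 1_{(s_i,s_{i+1}]} (s_m = s, with c_{-1} := 0) and g = ∑_{j=0}^{n-1} d_j 1_{(t_j,t_{j+1}]} (t_n = t). Then H f(s) ∫_{-∞}^{t} |s-v|^{2H-1} sgn(s-v) g(v) dv + H ∑_{i=0}^{m-1} (c_i - c_{i-1}) ∑_{j=0}^{n-1} d_j ∫_{t_j}^{t_{j+1}} |s_i - v|^{2H-1} sgn(v - s_i) dv = (1/2) ∑_{i=0}^{m-1} ∑_{j=0}^{n-1} c_i d_j (|s_{i+1}-t_j|^{2H} + |s_i-t_{j+1}|^{2H} - |s_{i+1}-t_{j+1}|^{2H} - |s_i-t_j|^{2H}), i.e. the right-hand side of the covariance formula (9) agrees with the covariance of the fBm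 integrals of f and g. -/
open MeasureTheory

/-- Interval integrability of `|u|^p * sign u` for `-1 < p`, `p ≠ 0`. -/
lemma sign_abs_intervalIntegrable {p : ℝ} (hp : -1 < p) (hp0 : p ≠ 0) (A B : ℝ) :
    IntervalIntegrable (fun u : ℝ => |u| ^ p * Real.sign u) volume A B := by
  have key : ∀ C : ℝ, IntervalIntegrable (fun u : ℝ => |u| ^ p * Real.sign u) volume 0 C := by
    intro C
    rcases le_or_gt 0 C with hC | hC
    · refine (intervalIntegral.intervalIntegrable_rpow' hp (a := 0) (b := C)).congr_ae ?_
      filter_upwards [MeasureTheory.ae_restrict_mem measurableSet_uIoc] with u hu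
      rw [Set.uIoc_of_le hC] at hu
      rw [abs_of_pos hu.1, Real.sign_of_pos hu.1, mul_one]
    · have h1 : IntervalIntegrable (fun u : ℝ => -((-u) ^ p)) volume 0 C := by
        have h2 := (intervalIntegral.intervalIntegrable_rpow' hp (a := 0) (b := -C)).neg
        have h3 := (IntervalIntegrable.iff_comp_neg).mp h2
        simpa using h3
      refine h1.congr_ae ?_
      filter_upwards [MeasureTheory.ae_restrict_mem measurableSet_uIoc] with u hu
      rw [Set.uIoc_comm, Set.uIoc_of_le hC.le] at hu
      rcases lt_or_eq_of_le hu.2 with h | h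
      · rw [abs_of_neg h, Real.sign_of_neg h, mul_neg_one]
      · subst h
        simp [Real.zero_rpow hp0]
  exact (key A).symm.trans (key B)

/-- Evaluation of `∫ |u|^p * sign u` via the even antiderivative `|u|^(p+1)/(p+1)`. -/
lemma sign_abs_integral {p : ℝ} (hp : -1 < p) (hp0 : p ≠ 0) (A B : ℝ) :
    ∫ u in A..B, |u| ^ p * Real.sign u = (|B| ^ (p + 1) - |A| ^ (p + 1)) / (p + 1) := by
  have hp1 : p + 1 ≠ 0 := by linarith
  have key : ∀ C : ℝ, ∫ u in (0:ℝ)..C, |u| ^ p * Real.sign u = |C| ^ (p + 1) / (p + 1) := by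
    intro C
    rcases le_or_gt 0 C with hC | hC
    · have hEq : Set.EqOn (fun u : ℝ => |u| ^ p * Real.sign u) (fun u : ℝ => u ^ p)
          (Set.uIcc 0 C) := by
        intro u hu
        rw [Set.uIcc_of_le hC] at hu
        rcases lt_or_eq_of_le hu.1 with h | h
        · simp only
          rw [abs_of_pos h, Real.sign_of_pos h, mul_one]
        · subst h
          simp [Real.zero_rpow hp0]
      rw [intervalIntegral.integral_congr hEq, integral_rpow (Or.inl hp),
        abs_of_nonneg hC, Real.zero_rpow hp1, sub_zero]
    · have hEq : Set.EqOn (fun u : ℝ => |u| ^ p * Real.sign u) (fun u : ℝ => -((-u) ^ p))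
          (Set.uIcc 0 C) := by
        intro u hu
        rw [Set.uIcc_comm, Set.uIcc_of_le hC.le] at hu
        rcases lt_or_eq_of_le hu.2 with h | h
        · simp only
          rw [abs_of_neg h, Real.sign_of_neg h, mul_neg_one]
        · subst h
          simp [Real.zero_rpow hp0]
      rw [intervalIntegral.integral_congr hEq]
      have h4 := intervalIntegral.integral_comp_neg (a := (0:ℝ)) (b := C)
        (f := fun w : ℝ => -(w ^ p))
      simp only [neg_zero] at h4
      rw [h4, intervalIntegral.integral_neg, integral_rpow (Or.inl hp),
        Real.zero_rpow hp1, abs_of_neg hC]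
      ring
  have hsplit := intervalIntegral.integral_add_adjacent_intervals
    (sign_abs_intervalIntegrable hp hp0 A 0) (sign_abs_intervalIntegrable hp hp0 0 B)
  rw [← hsplit, intervalIntegral.integral_symm, key A, key B]
  ring

/-- Abel summation identity. -/
lemma abel_sum (m : ℕ) (hm : 0 < m) (c B : ℕ → ℝ) :
    ∑ i ∈ Finset.range m, c i * (B i - B (i + 1))
      = ∑ i ∈ Finset.range m, (c i - if i = 0 then 0 else c (i - 1)) * B i
        - c (m - 1) * B m := by
  induction m with
  | zero => omega
  | succ k ih =>
    rcases Nat.eq_zero_or_pos k with hk | hk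
    · subst hk; simp; ring
    · rw [Finset.sum_range_succ, Finset.sum_range_succ, ih hk]
      have hk0 : k ≠ 0 := hk.ne'
      simp only [hk0, if_false, Nat.add_sub_cancel]
      ring

/-- Evaluation of the set integral over `Ioc a b`. -/
lemma eval_Ioc {p : ℝ} (hp : -1 < p) (hp0 : p ≠ 0) (x a b : ℝ) (hab : a ≤ b) :
    ∫ v in Set.Ioc a b, |x - v| ^ p * Real.sign (v - x)
      = (|x - b| ^ (p + 1) - |x - a| ^ (p + 1)) / (p + 1) := by
  rw [← intervalIntegral.integral_of_le hab]
  have h1 : (fun v : ℝ => |x - v| ^ p * Real.sign (v - x))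
      = fun v : ℝ => (fun u : ℝ => |u| ^ p * Real.sign u) (v - x) := by
    funext v; simp only; rw [abs_sub_comm]
  rw [h1, intervalIntegral.integral_comp_sub_right (fun u : ℝ => |u| ^ p * Real.sign u) x,
    sign_abs_integral hp hp0, abs_sub_comm b x, abs_sub_comm a x]

lemma F_intervalIntegrable {p : ℝ} (hp : -1 < p) (hp0 : p ≠ 0) (x a b : ℝ) :
    IntervalIntegrable (fun v : ℝ => |x - v| ^ p * Real.sign (v - x)) volume a b := by
  have h2 := (sign_abs_intervalIntegrable hp hp0 (a - x) (b - x)).comp_sub_right x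
  simp only [sub_add_cancel] at h2
  have h1 : (fun v : ℝ => |x - v| ^ p * Real.sign (v - x))
      = fun v : ℝ => |v - x| ^ p * Real.sign (v - x) := by
    funext v; rw [abs_sub_comm]
  rw [h1]; exact h2

/-- The purely algebraic (Abel summation) identity. -/
lemma alg_identity (H : ℝ) (hH : H ≠ 0) (m n : ℕ) (hm : 0 < m)
    (c d : ℕ → ℝ) (P : ℕ → ℕ → ℝ) :
    H * c (m - 1) * ∑ j ∈ Finset.range n, d j * ((P m j - P m (j + 1)) / (2 * H))
      + H * ∑ i ∈ Finset.range m, (c i - if i = 0 then 0 else c (i - 1)) *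
          ∑ j ∈ Finset.range n, d j * ((P i (j + 1) - P i j) / (2 * H))
      = (1/2) * ∑ i ∈ Finset.range m, ∑ j ∈ Finset.range n, c i * d j *
          (P (i + 1) j + P i (j + 1) - P (i + 1) (j + 1) - P i j) := by
  set B : ℕ → ℝ := fun i => ∑ j ∈ Finset.range n, d j * (P i (j + 1) - P i j) with hB
  have h1 : ∑ j ∈ Finset.range n, d j * ((P m j - P m (j + 1)) / (2 * H))
      = -B m / (2 * H) := by
    rw [hB]; simp only; rw [neg_div, Finset.sum_div, ← Finset.sum_neg_distrib]
    exact Finset.sum_congr rfl fun j _ => by ring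
  have h2 : ∀ i, ∑ j ∈ Finset.range n, d j * ((P i (j + 1) - P i j) / (2 * H))
      = B i / (2 * H) := by
    intro i; rw [hB]; simp only; rw [Finset.sum_div]
    exact Finset.sum_congr rfl fun j _ => by ring
  have h3 : ∀ i, ∑ j ∈ Finset.range n, c i * d j *
      (P (i + 1) j + P i (j + 1) - P (i + 1) (j + 1) - P i j) = c i * (B i - B (i + 1)) := by
    intro i; rw [hB]; simp only; rw [← Finset.sum_sub_distrib, Finset.mul_sum]
    exact Finset.sum_congr rfl fun j _ => by ring
  simp only [h1, h2, h3]
  rw [abel_sum m hm c B]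
  have e : ∑ i ∈ Finset.range m, (c i - if i = 0 then 0 else c (i - 1)) * (B i / (2 * H))
      = (∑ i ∈ Finset.range m, (c i - if i = 0 then 0 else c (i - 1)) * B i) / (2 * H) := by
    rw [Finset.sum_div]
    exact Finset.sum_congr rfl fun i _ => by ring
  rw [e]
  field_simp
  ring

theorem carfima_eq9_rhs_for_step_functions
    (H : ℝ) (h0 : 0 < H) (h1 : H < 1/2)
    (m n : ℕ) (hm : 0 < m) (hn : 0 < n)
    (s t : ℕ → ℝ)
    (hs : ∀ i < m, s i < s (i+1)) (ht : ∀ j < n, t j < t (j+1))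
    (c d : ℕ → ℝ)
    (g : ℝ → ℝ)
    (hg : ∀ v : ℝ, g v = ∑ j ∈ Finset.range n,
      d j * Set.indicator (Set.Ioc (t j) (t (j+1))) (fun _ => (1:ℝ)) v) :
    H * c (m - 1) *
        (∫ v in Set.Iic (t n), |s m - v| ^ (2*H - 1) * Real.sign (s m - v) * g v)
      + H * ∑ i ∈ Finset.range m,
          (c i - (if i = 0 then 0 else c (i - 1))) *
            ∑ j ∈ Finset.range n, d j *
              ∫ v in Set.Ioc (t j) (t (j+1)), |s i - v| ^ (2*H - 1) * Real.sign (v - s i)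
      = (1/2) * ∑ i ∈ Finset.range m, ∑ j ∈ Finset.range n, c i * d j *
          (|s (i+1) - t j| ^ (2*H) + |s i - t (j+1)| ^ (2*H)
            - |s (i+1) - t (j+1)| ^ (2*H) - |s i - t j| ^ (2*H)) := by
  have hp : (-1:ℝ) < 2*H - 1 := by linarith
  have hp0 : (2*H - 1 : ℝ) ≠ 0 := by intro h; nlinarith
  have hps : (2*H - 1 + 1 : ℝ) = 2*H := by ring
  have h2H : (2*H : ℝ) ≠ 0 := by positivity
  -- monotonicity of t up to n
  have hmono : ∀ b ≤ n, ∀ a ≤ b, t a ≤ t b := by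
    intro b
    induction b with
    | zero => intro _ a ha; simp [Nat.le_zero.mp ha]
    | succ k ih =>
      intro hk a ha
      rcases eq_or_lt_of_le ha with h | h
      · rw [h]
      · exact le_trans (ih (by omega) a (by omega)) (ht k (by omega)).le
  -- evaluate the inner Ioc integrals
  have e2 : ∀ i, ∑ j ∈ Finset.range n, d j *
        ∫ v in Set.Ioc (t j) (t (j+1)), |s i - v| ^ (2*H - 1) * Real.sign (v - s i)
      = ∑ j ∈ Finset.range n, d j *
          ((|s i - t (j+1)| ^ (2*H) - |s i - t j| ^ (2*H)) / (2*H)) := by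
    intro i
    refine Finset.sum_congr rfl fun j hj => ?_
    rw [eval_Ioc hp hp0 _ _ _ (ht j (Finset.mem_range.mp hj)).le, hps]
  -- evaluate the first integral
  have e1 : ∫ v in Set.Iic (t n), |s m - v| ^ (2*H - 1) * Real.sign (s m - v) * g v
      = ∑ j ∈ Finset.range n, d j *
          ((|s m - t j| ^ (2*H) - |s m - t (j+1)| ^ (2*H)) / (2*H)) := by
    have hgF : (fun v => |s m - v| ^ (2*H - 1) * Real.sign (s m - v) * g v)
        = fun v => ∑ j ∈ Finset.range n, d j * Set.indicator (Set.Ioc (t j) (t (j+1)))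
            (fun w => |s m - w| ^ (2*H - 1) * Real.sign (s m - w)) v := by
      funext v
      rw [hg v, Finset.mul_sum]
      refine Finset.sum_congr rfl fun j hj => ?_
      by_cases hv : v ∈ Set.Ioc (t j) (t (j+1))
      · rw [Set.indicator_of_mem hv, Set.indicator_of_mem hv]; ring
      · rw [Set.indicator_of_notMem hv, Set.indicator_of_notMem hv]; ring
    have hFint : ∀ a b : ℝ, IntervalIntegrable
        (fun w => |s m - w| ^ (2*H - 1) * Real.sign (s m - w)) volume a b := by
      intro a b
      have := F_intervalIntegrable hp hp0 (s m) a b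
      have hsg : (fun v : ℝ => |s m - v| ^ (2*H - 1) * Real.sign (v - s m))
          = fun v : ℝ => -(|s m - v| ^ (2*H - 1) * Real.sign (s m - v)) := by
        funext v
        rw [show v - s m = -(s m - v) by ring, Real.sign_neg]
        ring
      rw [hsg] at this
      have h5 := this.neg
      have h6 : (-fun v : ℝ => -(|s m - v| ^ (2*H - 1) * Real.sign (s m - v)))
          = fun w : ℝ => |s m - w| ^ (2*H - 1) * Real.sign (s m - w) := by
        funext v; simp
      rwa [h6] at h5
    have hintj : ∀ j ∈ Finset.range n, Integrable
        (fun v => d j * Set.indicator (Set.Ioc (t j) (t (j+1)))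
          (fun w => |s m - w| ^ (2*H - 1) * Real.sign (s m - w)) v)
        (volume.restrict (Set.Iic (t n))) := by
      intro j hj
      refine Integrable.const_mul ?_ _
      rw [integrable_indicator_iff measurableSet_Ioc]
      have hIO : IntegrableOn (fun w => |s m - w| ^ (2*H - 1) * Real.sign (s m - w))
          (Set.Ioc (t j) (t (j+1))) volume := (hFint (t j) (t (j+1))).1
      have : IntegrableOn (fun w => |s m - w| ^ (2*H - 1) * Real.sign (s m - w))
          (Set.Ioc (t j) (t (j+1)) ∩ Set.Iic (t n)) volume :=
        hIO.mono_set Set.inter_subset_left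
      rwa [IntegrableOn, Measure.restrict_restrict measurableSet_Ioc]
    rw [hgF, integral_finset_sum _ hintj]
    refine Finset.sum_congr rfl fun j hj => ?_
    rw [integral_const_mul, setIntegral_indicator measurableSet_Ioc]
    have hsub : Set.Iic (t n) ∩ Set.Ioc (t j) (t (j+1)) = Set.Ioc (t j) (t (j+1)) := by
      refine Set.inter_eq_self_of_subset_right fun v hv => ?_
      exact le_trans hv.2 (hmono n le_rfl (j+1) (Finset.mem_range.mp hj))
    rw [hsub]
    have hsg : (fun v : ℝ => |s m - v| ^ (2*H - 1) * Real.sign (s m - v))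
        = fun v : ℝ => -(|s m - v| ^ (2*H - 1) * Real.sign (v - s m)) := by
      funext v
      rw [show v - s m = -(s m - v) by ring, Real.sign_neg]
      ring
    rw [hsg, integral_neg, eval_Ioc hp hp0 _ _ _
      (ht j (Finset.mem_range.mp hj)).le, hps]
    ring
  rw [e1]
  have e2' : ∑ i ∈ Finset.range m, (c i - if i = 0 then 0 else c (i - 1)) *
        ∑ j ∈ Finset.range n, d j *
          ∫ v in Set.Ioc (t j) (t (j+1)), |s i - v| ^ (2*H - 1) * Real.sign (v - s i)
      = ∑ i ∈ Finset.range m, (c i - if i = 0 then 0 else c (i - 1)) *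
        ∑ j ∈ Finset.range n, d j *
          ((|s i - t (j+1)| ^ (2*H) - |s i - t j| ^ (2*H)) / (2*H)) :=
    Finset.sum_congr rfl fun i _ => by rw [e2 i]
  rw [e2']
  exact alg_identity H h0.ne' m n hm c d (fun i j => |s i - t j| ^ (2*H))
end

section
/- Let λ_1,...,λ_p be distinct nonzero complex numbers with λ_i + λ_j ≠ 0 for all i,j, let α(z) = ∏_{i=1}^p (z - λ_i) and let β be a polynomial of degree at most p-1 with α(0) ≠ 0. Then ∑_{i=1}^{p} β(λ_i) β(-λ_i) / (α'(λ_i) α(-λ_i) λ_i) = -(1/2) β(0)^2 / α(0)^2. -/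
open Polynomial Finset

lemma leadingCoeff_basisDivisor {x y : ℂ} :
    (Lagrange.basisDivisor x y).leadingCoeff = (x - y)⁻¹ := by
  rcases eq_or_ne x y with rfl | h
  · simp [Lagrange.basisDivisor_self]
  · rw [Lagrange.basisDivisor, leadingCoeff_mul, leadingCoeff_C,
      (monic_X_sub_C y).leadingCoeff, mul_one]

lemma coeff_interpolate {ι : Type*} [DecidableEq ι] (s : Finset ι) (v : ι → ℂ)
    (hvs : Set.InjOn v s) (r : ι → ℂ) :
    (Lagrange.interpolate s v r).coeff (s.card - 1)
      = ∑ i ∈ s, r i * Lagrange.nodalWeight s v i := by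
  rw [Lagrange.interpolate_apply, finset_sum_coeff]
  refine Finset.sum_congr rfl fun i hi => ?_
  rw [coeff_C_mul]
  congr 1
  have h1 := Lagrange.natDegree_basis hvs hi
  rw [← h1, coeff_natDegree, Lagrange.basis, leadingCoeff_prod]
  simp_rw [leadingCoeff_basisDivisor]
  rw [Lagrange.nodalWeight]

lemma sum_eval_mul_nodalWeight_eq_zero {ι : Type*} [DecidableEq ι] (s : Finset ι)
    (v : ι → ℂ) (hvs : Set.InjOn v s) (g : ℂ[X])
    (hg : g.degree < ((s.card - 1 : ℕ) : WithBot ℕ)) :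
    ∑ i ∈ s, g.eval (v i) * Lagrange.nodalWeight s v i = 0 := by
  have hg' : g.degree < (s.card : WithBot ℕ) :=
    lt_of_lt_of_le hg (by exact_mod_cast Nat.sub_le _ _)
  have h := Lagrange.eq_interpolate hvs hg'
  have h2 := coeff_interpolate s v hvs (fun i => g.eval (v i))
  rw [← h] at h2
  rw [← h2, coeff_eq_zero_of_degree_lt hg]

lemma prod_erase_eq_prod_ite {ι : Type*} [DecidableEq ι] (s : Finset ι) (k : ι) (f : ι → ℂ) :
    ∏ j ∈ s.erase k, f j = ∏ j ∈ s, if j = k then 1 else f j := by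
  rw [← Finset.prod_erase s (f := fun j => if j = k then 1 else f j) (if_pos rfl)]
  exact Finset.prod_congr rfl fun j hj => (if_neg (Finset.mem_erase.mp hj).1).symm

theorem carfima_root_sum_identity
    (p : ℕ) (hp : 0 < p) (l : Fin p → ℂ) (hl : Function.Injective l)
    (hlne : ∀ i, l i ≠ 0) (hsum : ∀ i j, l i + l j ≠ 0)
    (α : Polynomial ℂ) (hα : α = ∏ i, (X - C (l i))) (hα0 : α.eval 0 ≠ 0)
    (β : Polynomial ℂ) (hβ : β.degree < p) :
    ∑ i, β.eval (l i) * β.eval (-(l i)) /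
        (α.derivative.eval (l i) * α.eval (-(l i)) * l i)
      = -(1/2) * (β.eval 0) ^ 2 / (α.eval 0) ^ 2 := by
  classical
  -- basic quantities
  set ε : ℂ := (-1) ^ p with hε
  have hε2 : ε * ε = 1 := by rw [hε, ← mul_pow]; norm_num
  have hεinv : ε⁻¹ = ε := inv_eq_of_mul_eq_one_right hε2
  have hεne : ε ≠ 0 := by rw [hε]; exact pow_ne_zero _ (by norm_num)
  set Q : ℂ := ∏ j, l j with hQ
  have hQne : Q ≠ 0 := Finset.prod_ne_zero_iff.mpr fun j _ => hlne j
  set A : Fin p → ℂ := fun i => ∏ j ∈ univ.erase i, (l i - l j) with hA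
  set B : Fin p → ℂ := fun i => ∏ j, (l i + l j) with hB
  have hAne : ∀ i, A i ≠ 0 := fun i =>
    Finset.prod_ne_zero_iff.mpr fun j hj =>
      sub_ne_zero.mpr fun h => (Finset.mem_erase.mp hj).1 (hl h.symm)
  have hBne : ∀ i, B i ≠ 0 := fun i => Finset.prod_ne_zero_iff.mpr fun j _ => hsum i j
  -- evaluations of α
  have hαe : ∀ x : ℂ, α.eval x = ∏ j, (x - l j) := fun x => by
    simp [hα, eval_prod]
  have hαd : ∀ i, α.derivative.eval (l i) = A i := by
    intro i
    have hn : α = Lagrange.nodal univ l := by rw [hα, Lagrange.nodal_eq]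
    rw [hn, Lagrange.eval_nodal_derivative_eval_node_eq (Finset.mem_univ i),
      Lagrange.eval_nodal, hA]
  have hα0Q : α.eval 0 = ε * Q := by
    rw [hαe]
    calc ∏ j, (0 - l j) = ∏ j : Fin p, (-1) * l j :=
          Finset.prod_congr rfl fun j _ => by ring
      _ = ε * Q := by
          rw [Finset.prod_mul_distrib, Finset.prod_const, Finset.card_univ,
            Fintype.card_fin, hε, hQ]
  have hαneg : ∀ i, α.eval (-l i) = ε * B i := by
    intro i
    rw [hαe]
    calc ∏ j, (-l i - l j) = ∏ j : Fin p, (-1) * (l i + l j) :=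
          Finset.prod_congr rfl fun j _ => by ring
      _ = ε * B i := by
          rw [Finset.prod_mul_distrib, Finset.prod_const, Finset.card_univ,
            Fintype.card_fin, hε, hB]
  -- the even polynomial g
  set g : ℂ[X] := β * β.comp (-X) with hg
  have hgeval : ∀ x : ℂ, g.eval x = β.eval x * β.eval (-x) := fun x => by
    simp [hg, eval_comp]
  have hβnd : β.natDegree < p := by
    rcases eq_or_ne β 0 with rfl | hβ0
    · simpa using hp
    · exact (natDegree_lt_iff_degree_lt hβ0).mpr hβ
  have hgd : g.degree < ((2 * p : ℕ) : WithBot ℕ) := by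
    have h2 : (β.comp (-X)).natDegree ≤ β.natDegree := by
      simpa using natDegree_comp_le (p := β) (q := (-X : ℂ[X]))
    have h1 : g.natDegree < 2 * p := by
      have h3 := natDegree_mul_le (p := β) (q := β.comp (-X))
      rw [← hg] at h3
      omega
    exact lt_of_le_of_lt degree_le_natDegree (by exact_mod_cast h1)
  -- index type and node map
  let v : Option (Fin p ⊕ Fin p) → ℂ := fun k => k.elim 0 (Sum.elim l fun i => -l i)
  have hv0 : v none = 0 := rfl
  have hv1 : ∀ i, v (some (Sum.inl i)) = l i := fun _ => rfl
  have hv2 : ∀ i, v (some (Sum.inr i)) = -l i := fun _ => rfl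
  have hvinj : Function.Injective v := by
    have hne' : ∀ i j : Fin p, l i ≠ -l j := fun i j h =>
      hsum i j (by rw [h]; ring)
    rintro (_ | a | a) (_ | b | b) h <;>
      simp only [hv0, hv1, hv2] at h
    · rfl
    · exact absurd h.symm (hlne b)
    · exact absurd (neg_eq_zero.mp h.symm) (hlne b)
    · exact absurd h (hlne a)
    · rw [hl h]
    · exact absurd h (hne' a b)
    · exact absurd (neg_eq_zero.mp h) (hlne a)
    · exact absurd h.symm (hne' b a)
    · rw [hl (neg_injective h)]
  have hcard : (univ : Finset (Option (Fin p ⊕ Fin p))).card = 2 * p + 1 := by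
    simp [Finset.card_univ, Fintype.card_option, Fintype.card_sum, two_mul]
  have key := sum_eval_mul_nodalWeight_eq_zero univ v hvinj.injOn g
    (by rw [hcard]; simpa using hgd)
  -- compute the nodal weights
  have hWgen : ∀ k, Lagrange.nodalWeight univ v k =
      (if (none : Option (Fin p ⊕ Fin p)) = k then 1 else (v k - v none)⁻¹) *
      ((∏ j, if (some (Sum.inl j) : Option (Fin p ⊕ Fin p)) = k then 1
          else (v k - l j)⁻¹) *
        ∏ j, if (some (Sum.inr j) : Option (Fin p ⊕ Fin p)) = k then 1
          else (v k - (-l j))⁻¹) := by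
    intro k
    rw [Lagrange.nodalWeight, prod_erase_eq_prod_ite, univ_option,
      Finset.prod_insertNone, Fintype.prod_sum_type]
    rfl
  have hW0 : Lagrange.nodalWeight univ v none = (ε * Q)⁻¹ * Q⁻¹ := by
    rw [hWgen, if_pos rfl, one_mul, ← hα0Q, hα0Q]
    have e1 : (∏ j, if (some (Sum.inl j) : Option (Fin p ⊕ Fin p)) = none then 1
        else (v none - l j)⁻¹) = (ε * Q)⁻¹ := by
      rw [← hα0Q, hαe, ← Finset.prod_inv_distrib]
      exact Finset.prod_congr rfl fun j _ => by rw [if_neg (by simp), hv0]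
    have e2 : (∏ j, if (some (Sum.inr j) : Option (Fin p ⊕ Fin p)) = none then 1
        else (v none - (-l j))⁻¹) = Q⁻¹ := by
      rw [hQ, ← Finset.prod_inv_distrib]
      exact Finset.prod_congr rfl fun j _ => by rw [if_neg (by simp), hv0]; ring_nf
    rw [e1, e2]
  have hW1 : ∀ i, Lagrange.nodalWeight univ v (some (Sum.inl i))
      = (l i)⁻¹ * ((A i)⁻¹ * (B i)⁻¹) := by
    intro i
    rw [hWgen, if_neg (by simp), hv1, hv0, sub_zero]
    have e1 : (∏ j, if (some (Sum.inl j) : Option (Fin p ⊕ Fin p)) = some (Sum.inl i)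
        then 1 else (l i - l j)⁻¹) = (A i)⁻¹ := by
      have h1 : (A i)⁻¹ = ∏ j ∈ univ.erase i, (l i - l j)⁻¹ := by
        rw [hA]; exact (Finset.prod_inv_distrib _).symm
      rw [h1, prod_erase_eq_prod_ite]
      refine Finset.prod_congr rfl fun j _ => ?_
      simp
    have e2 : (∏ j, if (some (Sum.inr j) : Option (Fin p ⊕ Fin p)) = some (Sum.inl i)
        then 1 else (l i - -l j)⁻¹) = (B i)⁻¹ := by
      rw [hB, ← Finset.prod_inv_distrib]
      refine Finset.prod_congr rfl fun j _ => ?_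
      rw [if_neg (by simp), sub_neg_eq_add]
    rw [e1, e2]
  have hW2 : ∀ i, Lagrange.nodalWeight univ v (some (Sum.inr i))
      = (l i)⁻¹ * ((A i)⁻¹ * (B i)⁻¹) := by
    intro i
    rw [hWgen, if_neg (by simp), hv2, hv0, sub_zero]
    have e1 : (∏ j, if (some (Sum.inl j) : Option (Fin p ⊕ Fin p)) = some (Sum.inr i)
        then 1 else (-l i - l j)⁻¹) = (ε * B i)⁻¹ := by
      rw [← hαneg i, hαe, ← Finset.prod_inv_distrib]
      refine Finset.prod_congr rfl fun j _ => ?_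
      rw [if_neg (by simp)]
    have e2 : (∏ j, if (some (Sum.inr j) : Option (Fin p ⊕ Fin p)) = some (Sum.inr i)
        then 1 else (-l i - -l j)⁻¹) = ((-1:ℂ)^(p-1) * A i)⁻¹ := by
      have h1 : (-1:ℂ)^(p-1) * A i = ∏ j ∈ univ.erase i, (-l i + l j) := by
        rw [hA]
        calc ((-1:ℂ)^(p-1)) * ∏ j ∈ univ.erase i, (l i - l j)
            = ∏ j ∈ univ.erase i, ((-1) * (l i - l j)) := by
              rw [Finset.prod_mul_distrib, Finset.prod_const,
                Finset.card_erase_of_mem (Finset.mem_univ i), Finset.card_univ,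
                Fintype.card_fin]
          _ = ∏ j ∈ univ.erase i, (-l i + l j) :=
              Finset.prod_congr rfl fun j _ => by ring
      rw [h1, ← Finset.prod_inv_distrib, prod_erase_eq_prod_ite]
      refine Finset.prod_congr rfl fun j _ => ?_
      simp only [Option.some.injEq, Sum.inr.injEq]
      rcases eq_or_ne j i with rfl | hji
      · simp
      · rw [if_neg hji, if_neg hji]
        congr 1
        ring
    rw [e1, e2]
    have h3 : ((-1:ℂ)^(p-1) * A i)⁻¹ = (-1)^(p-1) * (A i)⁻¹ := by
      rw [mul_inv, ← inv_pow, inv_neg, inv_one]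
    have h4 : (ε * B i)⁻¹ = ε * (B i)⁻¹ := by rw [mul_inv, hεinv]
    have h5 : (-(l i))⁻¹ = -(l i)⁻¹ := by rw [inv_neg]
    have h6 : (-1:ℂ) * ((-1)^(p-1) * ε) = 1 := by
      have h7 : (-1:ℂ) * (-1)^(p-1) = ε := by
        rw [hε, ← pow_succ']
        congr 1
        omega
      calc (-1:ℂ) * ((-1)^(p-1) * ε) = ((-1) * (-1)^(p-1)) * ε := by ring
        _ = ε * ε := by rw [h7]
        _ = 1 := hε2
    calc (-l i)⁻¹ * ((ε * B i)⁻¹ * ((-1:ℂ)^(p-1) * A i)⁻¹)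
        = ((-1) * ((-1)^(p-1) * ε)) * ((l i)⁻¹ * ((A i)⁻¹ * (B i)⁻¹)) := by
          rw [h3, h4, h5]; ring
      _ = (l i)⁻¹ * ((A i)⁻¹ * (B i)⁻¹) := by rw [h6, one_mul]
  -- expand the key identity
  rw [univ_option, Finset.sum_insertNone, Fintype.sum_sum_type] at key
  rw [← univ_option] at key
  simp only [hv0, hv1, hv2, hW0, hW1, hW2, hgeval, neg_zero, neg_neg] at key
  set S' : ℂ := ∑ i, eval (l i) β * eval (-l i) β * ((l i)⁻¹ * ((A i)⁻¹ * (B i)⁻¹))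
    with hS'
  have hkey2 : eval 0 β * eval 0 β * ((ε * Q)⁻¹ * Q⁻¹) + (S' + S') = 0 := by
    rw [hS']
    convert key using 3
    exact Finset.sum_congr rfl fun i _ => by ring
  field_simp [hεne, hQne] at hkey2
  -- rewrite the goal
  have hgoalterm : ∀ i, eval (l i) β * eval (-(l i)) β /
      (α.derivative.eval (l i) * α.eval (-(l i)) * l i)
      = ε * (eval (l i) β * eval (-l i) β * ((l i)⁻¹ * ((A i)⁻¹ * (B i)⁻¹))) := by
    intro i
    rw [hαd, hαneg, div_eq_mul_inv, mul_inv, mul_inv, mul_inv, hεinv]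
    ring
  have hq2 : (ε * Q)^2 = Q^2 := by rw [mul_pow, pow_two, hε2, one_mul]
  calc ∑ i, eval (l i) β * eval (-(l i)) β /
        (α.derivative.eval (l i) * α.eval (-(l i)) * l i)
      = ε * S' := by
        rw [hS', Finset.mul_sum]
        exact Finset.sum_congr rfl fun i _ => hgoalterm i
    _ = -(1/2) * (β.eval 0)^2 / (α.eval 0)^2 := by
        rw [hα0Q, hq2, eq_div_iff (pow_ne_zero 2 hQne)]
        linear_combination (1/2 : ℂ) * hkey2
end

section
/- Let A be a p×p companion matrix with characteristic polynomial α(z) = z^p - α_p z^{p-1} - ... - α_1, having distinct eigenvalues λ_1,...,λ_p, let δ_p be the p-th standard basis vector, and let β = (1, β_1, ..., β_{p-1})' with β(z) = 1 + β_1 z + ... + β_{p-1} z^{p-1}. Then for all h ≥ 0, β' e^{Ah} δ_p = ∑_{i=1}^{p} (β(λ_i)/α'(λ_i)) e^{λ_i h}. -/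
open Polynomial Matrix

lemma aux_eq_of_eval_eq {p : ℕ} (l : Fin p → ℂ) (hl : Function.Injective l)
    (q r : Polynomial ℂ) (hdeg : (q - r).degree < (p : WithBot ℕ))
    (heval : ∀ i, q.eval (l i) = r.eval (l i)) : q = r := by
  rcases eq_or_ne (q - r) 0 with h0 | h0
  · exact sub_eq_zero.mp h0
  · refine sub_eq_zero.mp (Polynomial.eq_zero_of_natDegree_lt_card_of_eval_eq_zero _ hl
      (fun i => by simp [heval i]) ?_)
    rw [Fintype.card_fin]
    exact (Polynomial.natDegree_lt_iff_degree_lt h0).mpr hdeg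

lemma aux_L_monic {p : ℕ} (l : Fin p → ℂ) (s : Finset (Fin p)) :
    (∏ j ∈ s, (X - C (l j))).Monic :=
  monic_prod_of_monic _ _ fun j _ => monic_X_sub_C _

lemma aux_L_natDegree {p : ℕ} (l : Fin p → ℂ) (s : Finset (Fin p)) :
    (∏ j ∈ s, (X - C (l j))).natDegree = s.card := by
  rw [Polynomial.natDegree_prod _ _ (fun j _ => X_sub_C_ne_zero _)]
  simp

lemma aux_L_degree {p : ℕ} (l : Fin p → ℂ) (s : Finset (Fin p)) :
    (∏ j ∈ s, (X - C (l j))).degree = (s.card : WithBot ℕ) := by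
  rw [Polynomial.degree_eq_natDegree (aux_L_monic l s).ne_zero, aux_L_natDegree]

lemma aux_sum_degree {p : ℕ} (hp : 0 < p) (a : Fin p → ℂ) :
    (∑ j : Fin p, C (a j) * X ^ (j : ℕ)).degree < (p : WithBot ℕ) := by
  refine lt_of_le_of_lt (Polynomial.degree_sum_le _ _) ?_
  rw [Finset.sup_lt_iff (by exact_mod_cast WithBot.bot_lt_coe p)]
  intro j _
  refine lt_of_le_of_lt (Polynomial.degree_C_mul_X_pow_le _ _) ?_
  exact_mod_cast j.isLt

lemma aux_deriv_eval {p : ℕ} (l : Fin p → ℂ) (i : Fin p) :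
    (Polynomial.derivative (∏ j : Fin p, (X - C (l j)))).eval (l i)
      = ∏ j ∈ Finset.univ.erase i, (l i - l j) := by
  have hfac : ∏ j : Fin p, (X - C (l j))
      = (X - C (l i)) * ∏ j ∈ Finset.univ.erase i, (X - C (l j)) :=
    (Finset.mul_prod_erase _ _ (Finset.mem_univ i)).symm
  rw [hfac, Polynomial.derivative_mul]
  simp [Polynomial.eval_prod]

lemma aux_alpha_prod {p : ℕ} (hp : 0 < p) (a : Fin p → ℂ) (l : Fin p → ℂ)
    (hl : Function.Injective l)
    (hroot : ∀ i, (X ^ p - ∑ j : Fin p, C (a j) * X ^ (j : ℕ)).eval (l i) = 0) :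
    X ^ p - ∑ j : Fin p, C (a j) * X ^ (j : ℕ) = ∏ i : Fin p, (X - C (l i)) := by
  apply aux_eq_of_eval_eq l hl
  · rw [sub_right_comm]
    refine lt_of_le_of_lt (Polynomial.degree_sub_le _ _) (max_lt ?_ (aux_sum_degree hp a))
    have h1 : (X ^ p - ∏ i : Fin p, (X - C (l i)) : Polynomial ℂ).degree < (X ^ p : Polynomial ℂ).degree := by
      refine Polynomial.degree_sub_lt ?_ (pow_ne_zero _ Polynomial.X_ne_zero) ?_
      · rw [Polynomial.degree_X_pow, aux_L_degree]; simp
      · rw [(Polynomial.monic_X_pow p).leadingCoeff, (aux_L_monic l Finset.univ).leadingCoeff]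
    rwa [Polynomial.degree_X_pow] at h1
  · intro i
    rw [hroot i, Polynomial.eval_prod]
    exact (Finset.prod_eq_zero (Finset.mem_univ i) (by simp)).symm

lemma aux_lagrange {p : ℕ} (hp : 0 < p) (l : Fin p → ℂ) (hl : Function.Injective l)
    (r : ℕ) (hr : r < p) :
    ∑ i, l i ^ r * (∏ j ∈ Finset.univ.erase i, (l i - l j))⁻¹
      = if r = p - 1 then 1 else 0 := by
  set d : Fin p → ℂ := fun i => ∏ j ∈ Finset.univ.erase i, (l i - l j) with hd
  have hdne : ∀ i, d i ≠ 0 := by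
    intro i
    refine Finset.prod_ne_zero_iff.mpr fun j hj => sub_ne_zero.mpr fun hij => ?_
    exact (Finset.mem_erase.mp hj).1 (hl hij.symm)
  set Q : Polynomial ℂ :=
    ∑ i, C (l i ^ r * (d i)⁻¹) * ∏ j ∈ Finset.univ.erase i, (X - C (l j)) with hQdef
  have hcard : ∀ i : Fin p, (Finset.univ.erase i).card = p - 1 := by
    intro i; rw [Finset.card_erase_of_mem (Finset.mem_univ i), Finset.card_univ, Fintype.card_fin]
  have hQ : Q = X ^ r := by
    apply aux_eq_of_eval_eq l hl
    · refine lt_of_le_of_lt (Polynomial.degree_sub_le _ _) (max_lt ?_ ?_)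
      · refine lt_of_le_of_lt (Polynomial.degree_sum_le _ _) ?_
        rw [Finset.sup_lt_iff (by exact_mod_cast WithBot.bot_lt_coe p)]
        intro i _
        calc ((C (l i ^ r * (d i)⁻¹) * ∏ j ∈ Finset.univ.erase i, (X - C (l j)))).degree
            ≤ (C (l i ^ r * (d i)⁻¹)).degree
              + (∏ j ∈ Finset.univ.erase i, (X - C (l j))).degree := Polynomial.degree_mul_le _ _
          _ ≤ 0 + ((p - 1 : ℕ) : WithBot ℕ) := by
              refine add_le_add Polynomial.degree_C_le (le_of_eq ?_)
              rw [aux_L_degree, hcard]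
          _ = ((p - 1 : ℕ) : WithBot ℕ) := zero_add _
          _ < (p : WithBot ℕ) := by exact_mod_cast Nat.sub_lt hp one_pos
      · rw [Polynomial.degree_X_pow]; exact_mod_cast hr
    · intro k
      rw [hQdef, Polynomial.eval_finset_sum]
      rw [Finset.sum_eq_single k]
      · simp only [Polynomial.eval_mul, Polynomial.eval_C, Polynomial.eval_prod,
          Polynomial.eval_sub, Polynomial.eval_X, Polynomial.eval_pow]
        rw [mul_assoc, inv_mul_cancel₀ (hdne k), mul_one]
      · intro i _ hik
        have hm : k ∈ Finset.univ.erase i :=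
          Finset.mem_erase.mpr ⟨fun hki => hik hki.symm, Finset.mem_univ _⟩
        simp [Polynomial.eval_prod, Finset.prod_eq_zero hm]
      · simp
  have hco := congrArg (fun q : Polynomial ℂ => q.coeff (p - 1)) hQ
  simp only [hQdef, Polynomial.finset_sum_coeff, Polynomial.coeff_C_mul,
    Polynomial.coeff_X_pow] at hco
  have hLco : ∀ i : Fin p, (∏ j ∈ Finset.univ.erase i, (X - C (l j))).coeff (p - 1) = 1 := by
    intro i
    have := (aux_L_monic l (Finset.univ.erase i)).coeff_natDegree
    rwa [aux_L_natDegree, hcard] at this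
  rw [Finset.sum_congr rfl fun i _ => by rw [hLco i, mul_one]] at hco
  rw [hco]
  simp [eq_comm]

theorem companion_exp_formula
    (p : ℕ) (hp : 0 < p)
    (a : Fin p → ℂ)
    (A : Matrix (Fin p) (Fin p) ℂ)
    (hA : ∀ i j : Fin p, A i j =
      if (i : ℕ) = p - 1 then a j else if (j : ℕ) = (i : ℕ) + 1 then 1 else 0)
    (α : Polynomial ℂ) (hα : α = X ^ p - ∑ j : Fin p, C (a j) * X ^ (j : ℕ))
    (l : Fin p → ℂ) (hl : Function.Injective l)
    (hroot : ∀ i, α.eval (l i) = 0)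
    (b : Fin p → ℂ) (hb0 : b ⟨0, hp⟩ = 1)
    (β : Polynomial ℂ) (hβ : β = ∑ j : Fin p, C (b j) * X ^ (j : ℕ))
    (e : Fin p → ℂ) (he : ∀ i, e i = if (i : ℕ) = p - 1 then 1 else 0)
    (h : ℝ) (hh : 0 ≤ h) :
    b ⬝ᵥ (NormedSpace.exp (h • A)).mulVec e
      = ∑ i, (β.eval (l i) / α.derivative.eval (l i)) * Complex.exp (l i * h) := by
  classical
  set V : Matrix (Fin p) (Fin p) ℂ := (Matrix.vandermonde l)ᵀ with hVdef
  have hVapp : ∀ r i : Fin p, V r i = l i ^ (r : ℕ) := fun r i => rfl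
  have hdet : IsUnit V.det := by
    rw [hVdef, Matrix.det_transpose]
    exact isUnit_iff_ne_zero.mpr (Matrix.det_vandermonde_ne_zero_iff.mpr hl)
  have hUnit : IsUnit V := (Matrix.isUnit_iff_isUnit_det V).mpr hdet
  set D := Matrix.diagonal l with hD
  have hAV : A * V = V * D := by
    ext r i
    rw [Matrix.mul_apply, hD, Matrix.mul_diagonal]
    by_cases hrp : (r : ℕ) = p - 1
    · have hα' := hroot i
      rw [hα] at hα'
      simp only [Polynomial.eval_sub, Polynomial.eval_pow, Polynomial.eval_X,
        Polynomial.eval_finset_sum, Polynomial.eval_mul, Polynomial.eval_C] at hα'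
      have hsum : ∑ j, a j * l i ^ (j : ℕ) = l i ^ p := (sub_eq_zero.mp hα').symm
      calc ∑ j, A r j * V j i = ∑ j, a j * l i ^ (j : ℕ) :=
            Finset.sum_congr rfl fun j _ => by rw [hA, hVapp, if_pos hrp]
        _ = l i ^ p := hsum
        _ = l i ^ ((r : ℕ) + 1) := by rw [hrp, Nat.sub_add_cancel hp]
        _ = V r i * l i := by rw [hVapp, pow_succ]
    · have hlt : (r : ℕ) + 1 < p := by omega
      rw [Finset.sum_eq_single (⟨(r : ℕ) + 1, hlt⟩ : Fin p)]
      · rw [hA, hVapp, if_neg hrp, if_pos rfl, one_mul, hVapp, pow_succ]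
      · intro c _ hc
        rw [hA, if_neg hrp, if_neg (fun hcc => hc (Fin.ext hcc)), zero_mul]
      · simp
  have hAeq : A = V * D * V⁻¹ := by
    calc A = A * V * V⁻¹ := by
          rw [Matrix.mul_assoc, Matrix.mul_nonsing_inv V hdet, Matrix.mul_one]
      _ = V * D * V⁻¹ := by rw [hAV]
  have hsmulA : h • A = V * (h • D) * V⁻¹ := by
    rw [hAeq, Matrix.mul_smul, Matrix.smul_mul]
  have hhD : h • D = Matrix.diagonal (fun i => (h : ℂ) * l i) := by
    ext i j
    rcases eq_or_ne i j with rfl | hij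
    · simp [hD, Complex.real_smul]
    · simp [hD, Matrix.diagonal_apply_ne _ hij]
  have hexpD : NormedSpace.exp (h • D)
      = Matrix.diagonal (fun i => Complex.exp ((h : ℂ) * l i)) := by
    have hpi : (NormedSpace.exp fun i => (h : ℂ) * l i)
        = fun i => Complex.exp ((h : ℂ) * l i) := by
      funext i
      rw [Pi.coe_exp, ← Complex.exp_eq_exp_ℂ]
    rw [hhD, Matrix.exp_diagonal, hpi]
  set U := hUnit.unit with hU
  have hUc : (U : Matrix (Fin p) (Fin p) ℂ) = V := hUnit.unit_spec
  have hUinv : ((U⁻¹ : (Matrix (Fin p) (Fin p) ℂ)ˣ) : Matrix (Fin p) (Fin p) ℂ) = V⁻¹ := by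
    rw [Matrix.coe_units_inv, hUc]
  have hexpA : NormedSpace.exp (h • A)
      = V * Matrix.diagonal (fun i => Complex.exp ((h : ℂ) * l i)) * V⁻¹ := by
    rw [hsmulA, ← hUc, ← Matrix.coe_units_inv, Matrix.exp_units_conj, hexpD]
  have hαprod : α = ∏ i : Fin p, (X - C (l i)) := by
    rw [hα]
    exact aux_alpha_prod hp a l hl fun k => by rw [← hα]; exact hroot k
  have hderiv : ∀ i, α.derivative.eval (l i) = ∏ j ∈ Finset.univ.erase i, (l i - l j) := by
    intro i
    rw [hαprod]
    exact aux_deriv_eval l i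
  set c : Fin p → ℂ := fun i => (α.derivative.eval (l i))⁻¹ with hc
  have hVc : V.mulVec c = e := by
    ext r
    have hlag := aux_lagrange hp l hl (r : ℕ) r.isLt
    calc V.mulVec c r = ∑ i, l i ^ (r : ℕ) * (∏ j ∈ Finset.univ.erase i, (l i - l j))⁻¹ := by
          simp only [Matrix.mulVec, dotProduct, hc]
          exact Finset.sum_congr rfl fun i _ => by rw [hVapp, hderiv]
      _ = if (r : ℕ) = p - 1 then 1 else 0 := hlag
      _ = e r := (he r).symm
  have hVinv_e : V⁻¹.mulVec e = c := by
    rw [← hVc, Matrix.mulVec_mulVec, Matrix.nonsing_inv_mul V hdet, Matrix.one_mulVec]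
  have hbV : ∀ i, Matrix.vecMul b V i = β.eval (l i) := by
    intro i
    rw [hβ]
    simp only [Matrix.vecMul, dotProduct, Polynomial.eval_finset_sum,
      Polynomial.eval_mul, Polynomial.eval_C, Polynomial.eval_pow, Polynomial.eval_X]
    exact Finset.sum_congr rfl fun r _ => by rw [hVapp]
  rw [hexpA, ← Matrix.mulVec_mulVec, ← Matrix.mulVec_mulVec, hVinv_e,
    Matrix.dotProduct_mulVec]
  simp only [dotProduct, Matrix.mulVec_diagonal]
  refine Finset.sum_congr rfl fun i _ => ?_
  rw [hbV i, hc, div_eq_mul_inv, mul_comm ((h : ℂ)) (l i)]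
  ring
end
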